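/- Let α be an assembly and τ ∈ ℕ⁺. Call a sequence of partitions of dom α a merge sequence if it starts with the partition of dom α into singletons, and each subsequent partition is obtained from the previous one by replacing two distinct parts C and C′, such that the total strength of interacting glues of α between positions in C and adjacent positions in C′ is at least τ, by their union C ∪ C′. Call a merge sequence maximal if no further such merge is possible from its final partition. Then the following are equivalent: (1) α is producible at temperature τ in the hierarchical model; (2) some merge sequence ends with the partition {dom α}; (3) every maximal merge sequence ends with the partition {dom α}. -/

import Mathlib

/-- A tile system over a type `T` of tile types: each tile type has, in each
direction (unit vector of `ℤ × ℤ`), a glue label (a natural number `ℕ`), and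
each glue label has a nonnegative integer strength given by `str`. -/
structure TileSystem (T : Type) where
  glue : T → ℤ × ℤ → ℕ
  str : ℕ → ℕ

/-- The four unit-vector directions of `ℤ²`. -/
def dirs : Finset (ℤ × ℤ) := {(0,1), (0,-1), (1,0), (-1,0)}

/-- An assembly: a partial function from `ℤ²` to tile types. -/
abbrev Assembly (T : Type) := ℤ × ℤ → Option T

/-- `D` is the domain of the assembly `α`. -/
def IsDom {T : Type} (α : Assembly T) (D : Finset (ℤ × ℤ)) : Prop :=
  ∀ p, (α p).isSome ↔ p ∈ D

/-- The strength of the bond between positions `p` and `q` in `α`: it is the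
strength of the common glue if `q - p` is a unit direction and the glue of the
tile at `p` in direction `q - p` matches the glue of the tile at `q` in
direction `p - q`; otherwise `0`. -/
def bond {T : Type} (ts : TileSystem T) (α : Assembly T) (p q : ℤ × ℤ) : ℕ :=
  match α p, α q with
  | some t, some t' =>
      if q - p ∈ dirs ∧ ts.glue t (q - p) = ts.glue t' (p - q)
      then ts.str (ts.glue t (q - p)) else 0
  | _, _ => 0

/-- Two positions of `α` interact if they hold tiles binding with positive strength. -/
def Interacts {T : Type} (ts : TileSystem T) (α : Assembly T) (p q : ℤ × ℤ) : Prop :=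
  0 < bond ts α p q

/-- Total strength of the interacting glues between positions in `A` and
(adjacent) positions in `B`. -/
def strengthBetween {T : Type} (ts : TileSystem T) (α : Assembly T)
    (A B : Finset (ℤ × ℤ)) : ℕ :=
  ∑ p ∈ A, ∑ q ∈ B, bond ts α p q

/-- `α` is `τ`-stable: every partition of its domain into two nonempty parts is
crossed by interacting glues of total strength at least `τ`. -/
def Stable {T : Type} (ts : TileSystem T) (α : Assembly T) (τ : ℕ) : Prop :=
  ∀ D A B : Finset (ℤ × ℤ), IsDom α D → A ∪ B = D → Disjoint A B →
    A.Nonempty → B.Nonempty → τ ≤ strengthBetween ts α A B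

/-- The union of two assemblies (agreeing with `α` wherever `α` is defined). -/
def aunion {T : Type} (α β : Assembly T) : Assembly T :=
  fun p => match α p with
    | some t => some t
    | none => β p

/-- Producibility in the hierarchical model at temperature `τ`: an assembly is
producible if it is a single tile, or the `τ`-stable union of two producible
assemblies with disjoint domains. -/
inductive Producible {T : Type} (ts : TileSystem T) (τ : ℕ) : Assembly T → Prop where
  | single (p : ℤ × ℤ) (t : T) :
      Producible ts τ (fun q => if q = p then some t else none)
  | union {α β : Assembly T} :
      Producible ts τ α → Producible ts τ β →
      (∀ p, α p = none ∨ β p = none) →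
      Stable ts (aunion α β) τ →
      Producible ts τ (aunion α β)

/-- Two assemblies are consistent if they agree wherever both are defined. -/
def Consistent {T : Type} (α β : Assembly T) : Prop :=
  ∀ p t t', α p = some t → β p = some t' → t = t'

/-- `α` is a subassembly of `β`. -/
def Subassembly {T : Type} (α β : Assembly T) : Prop :=
  ∀ p t, α p = some t → β p = some t

/-- A producible assembly is terminal if no producible assembly can stably attach to it. -/
def Terminal {T : Type} (ts : TileSystem T) (τ : ℕ) (α : Assembly T) : Prop :=
  ∀ β : Assembly T, Producible ts τ β → (∀ p, α p = none ∨ β p = none) →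
    ¬ Stable ts (aunion α β) τ

/-- The hierarchical system uniquely produces `α` if the set of producible
terminal assemblies equals `{α}`. -/
def UniquelyProduces {T : Type} (ts : TileSystem T) (τ : ℕ) (α : Assembly T) : Prop :=
  {γ : Assembly T | Producible ts τ γ ∧ Terminal ts τ γ} = {α}

/-- `𝒞` is a partition of the finite set `D`: pairwise disjoint nonempty parts
whose union is `D`. -/
def IsPartition (𝒞 : Finset (Finset (ℤ × ℤ))) (D : Finset (ℤ × ℤ)) : Prop :=
  (∀ C ∈ 𝒞, C.Nonempty) ∧
  (∀ C₁ ∈ 𝒞, ∀ C₂ ∈ 𝒞, C₁ ≠ C₂ → Disjoint C₁ C₂) ∧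
  𝒞.sup id = D

/-- One merge step on partitions of the domain of `α`: replace two distinct
parts whose attachment strength in `α` is at least `τ` by their union. -/
def MergeStep {T : Type} (ts : TileSystem T) (α : Assembly T) (τ : ℕ)
    (𝒞 𝒞' : Finset (Finset (ℤ × ℤ))) : Prop :=
  ∃ C₁ ∈ 𝒞, ∃ C₂ ∈ 𝒞, C₁ ≠ C₂ ∧ τ ≤ strengthBetween ts α C₁ C₂ ∧
    𝒞' = insert (C₁ ∪ C₂) ((𝒞.erase C₁).erase C₂)

/-- The partition of `D` into singletons. -/
def singletonsPart (D : Finset (ℤ × ℤ)) : Finset (Finset (ℤ × ℤ)) :=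
  D.image (fun p => {p})

/-- A merge sequence for `α` (with domain `D`) at temperature `τ`: a sequence of
partitions starting with the singleton partition, each subsequent one obtained
from the previous by a merge step. -/
def IsMergeSeq {T : Type} (ts : TileSystem T) (α : Assembly T) (τ : ℕ)
    (D : Finset (ℤ × ℤ)) (L : List (Finset (Finset (ℤ × ℤ)))) : Prop :=
  L.head? = some (singletonsPart D) ∧ L.Chain' (MergeStep ts α τ)

/-! In a partition of `dom α` admitting no merge, every assembly `β ⊑ α` occurring in a
producibility derivation of `α` has its domain inside a single part: otherwise the cut of `β`
into its two producible halves has strength at least `τ` and would let the two parts containing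
the halves merge. Conversely, along any merge sequence every part is the domain of a producible
subassembly, because two stable assemblies joined with strength at least `τ` form a stable
union. Merges decrease the number of parts, so maximal merge sequences exist. -/

open Finset Relation

theorem List.reflTransGen_iff_exists_head_getLast {σ : Type*} {r : σ → σ → Prop} {a b : σ} :
    ReflTransGen r a b ↔ ∃ L : List σ, L.head? = some a ∧ L.IsChain r ∧ L.getLast? = some b := by
  constructor
  · intro h
    obtain ⟨l, hc, hl⟩ := List.exists_isChain_cons_of_relationReflTransGen h
    exact ⟨a :: l, rfl, hc, by rw [List.getLast?_eq_some_getLast (List.cons_ne_nil a l), hl]⟩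
  · rintro ⟨_ | ⟨x, l⟩, ha, hc, hb⟩
    · simp at ha
    · obtain rfl : x = a := by simpa using ha
      rw [List.getLast?_eq_some_getLast (List.cons_ne_nil x l), Option.some_inj] at hb
      exact List.relationReflTransGen_of_exists_isChain_cons l hc hb

section Partitions

variable {𝒞 : Finset (Finset (ℤ × ℤ))} {D : Finset (ℤ × ℤ)}

theorem IsPartition.subset (h : IsPartition 𝒞 D) {C : Finset (ℤ × ℤ)} (hC : C ∈ 𝒞) : C ⊆ D :=
  h.2.2 ▸ le_sup (f := id) hC

theorem IsPartition.exists_mem (h : IsPartition 𝒞 D) {p : ℤ × ℤ} (hp : p ∈ D) :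
    ∃ C ∈ 𝒞, p ∈ C := by
  rw [← h.2.2] at hp
  simpa using hp

theorem IsPartition.eq_singleton (h : IsPartition 𝒞 D) {P : Finset (ℤ × ℤ)} (hP : P ∈ 𝒞)
    (hDP : D ⊆ P) : 𝒞 = {D} := by
  obtain rfl : P = D := (h.subset hP).antisymm hDP
  refine eq_singleton_iff_unique_mem.mpr ⟨hP, fun C hC => by_contra fun hne => ?_⟩
  obtain ⟨x, hx⟩ := h.1 C hC
  exact disjoint_left.mp (h.2.1 C hC P hP hne) hx (h.subset hC hx)

theorem isPartition_singletonsPart (D : Finset (ℤ × ℤ)) : IsPartition (singletonsPart D) D := by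
  refine ⟨?_, ?_, ?_⟩
  · rintro _ hC
    obtain ⟨p, -, rfl⟩ := mem_image.mp hC
    exact singleton_nonempty p
  · simp only [singletonsPart, mem_image]
    rintro _ ⟨p, -, rfl⟩ _ ⟨q, -, rfl⟩ hpq
    exact disjoint_singleton.mpr fun h => hpq (h ▸ rfl)
  · ext p
    simp [singletonsPart]

theorem IsPartition.merge (h : IsPartition 𝒞 D) {C₁ C₂ : Finset (ℤ × ℤ)} (h₁ : C₁ ∈ 𝒞)
    (h₂ : C₂ ∈ 𝒞) (hne : C₁ ≠ C₂) :
    IsPartition (insert (C₁ ∪ C₂) ((𝒞.erase C₁).erase C₂)) D := by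
  obtain ⟨hnon, hdisj, hsup⟩ := h
  have mem_rest : ∀ {X}, X ∈ (𝒞.erase C₁).erase C₂ ↔ X ≠ C₂ ∧ X ≠ C₁ ∧ X ∈ 𝒞 := by
    simp only [mem_erase, implies_true]
  refine ⟨?_, ?_, ?_⟩
  · simp only [mem_insert, forall_eq_or_imp, mem_rest]
    exact ⟨(hnon C₁ h₁).mono subset_union_left, fun X hX => hnon X hX.2.2⟩
  · have union_disj : ∀ X ∈ (𝒞.erase C₁).erase C₂, Disjoint X (C₁ ∪ C₂) := fun X hX => by
      rw [mem_rest] at hX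
      exact disjoint_union_right.mpr ⟨hdisj X hX.2.2 C₁ h₁ hX.2.1, hdisj X hX.2.2 C₂ h₂ hX.1⟩
    simp only [mem_insert]
    rintro X (rfl | hX) Y (rfl | hY) hXY
    · exact absurd rfl hXY
    · exact (union_disj Y hY).symm
    · exact union_disj X hX
    · exact hdisj X (mem_rest.mp hX).2.2 Y (mem_rest.mp hY).2.2 hXY
  · have h𝒞 : 𝒞 = insert C₁ (insert C₂ ((𝒞.erase C₁).erase C₂)) := by
      rw [insert_erase (mem_erase.mpr ⟨hne.symm, h₂⟩), insert_erase h₁]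
    rw [← hsup]
    conv_rhs => rw [h𝒞]
    simp only [sup_insert, id]
    exact sup_assoc C₁ C₂ _

end Partitions

section Bonds

variable {T : Type} {ts : TileSystem T} {α β γ : Assembly T}

theorem neg_mem_dirs {d : ℤ × ℤ} (h : d ∈ dirs) : -d ∈ dirs := by
  fin_cases h <;> decide

theorem bond_comm (p q : ℤ × ℤ) : bond ts α p q = bond ts α q p := by
  unfold bond
  rcases α p with _ | t <;> rcases α q with _ | t' <;> try rfl
  dsimp only
  have hdir : q - p ∈ dirs ↔ p - q ∈ dirs :=
    ⟨fun h => neg_sub q p ▸ neg_mem_dirs h, fun h => neg_sub p q ▸ neg_mem_dirs h⟩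
  by_cases h : q - p ∈ dirs ∧ ts.glue t (q - p) = ts.glue t' (p - q)
  · simp only [h, hdir.mp h.1, true_and, if_true]
  · rw [if_neg h, if_neg fun h' => h ⟨hdir.mpr h'.1, h'.2.symm⟩]

theorem strengthBetween_comm (A B : Finset (ℤ × ℤ)) :
    strengthBetween ts α A B = strengthBetween ts α B A := by
  unfold strengthBetween
  rw [sum_comm]
  simp only [bond_comm (α := α)]

theorem strengthBetween_mono {A A' B B' : Finset (ℤ × ℤ)} (hA : A ⊆ A') (hB : B ⊆ B') :
    strengthBetween ts α A B ≤ strengthBetween ts α A' B' :=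
  (sum_le_sum fun _ _ => sum_le_sum_of_subset hB).trans (sum_le_sum_of_subset hA)

theorem strengthBetween_congr {A B : Finset (ℤ × ℤ)} (h : ∀ p ∈ A ∪ B, α p = β p) :
    strengthBetween ts α A B = strengthBetween ts β A B := by
  refine sum_congr rfl fun p hp => sum_congr rfl fun q hq => ?_
  unfold bond
  rw [h p (mem_union_left _ hp), h q (mem_union_right _ hq)]

theorem bond_le_of_subassembly (h : Subassembly β α) (p q : ℤ × ℤ) :
    bond ts β p q ≤ bond ts α p q := by
  unfold bond
  rcases hp : β p with _ | t
  · exact Nat.zero_le _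
  rcases hq : β q with _ | t'
  · exact Nat.zero_le _
  rw [h p t hp, h q t' hq]

theorem strengthBetween_le_of_subassembly (h : Subassembly β α) (A B : Finset (ℤ × ℤ)) :
    strengthBetween ts β A B ≤ strengthBetween ts α A B :=
  sum_le_sum fun p _ => sum_le_sum fun q _ => bond_le_of_subassembly h p q

end Bonds

section Assemblies

variable {T : Type} {ts : TileSystem T} {τ : ℕ} {α β γ : Assembly T}

theorem IsDom.unique {E F : Finset (ℤ × ℤ)} (hE : IsDom α E) (hF : IsDom α F) : E = F :=
  ext fun p => (hE p).symm.trans (hF p)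

theorem isDom_single (p : ℤ × ℤ) (t : T) :
    IsDom (fun q => if q = p then some t else none) {p} := by
  intro q
  by_cases hq : q = p <;> simp [hq]

theorem isDom_aunion {Eβ Eγ : Finset (ℤ × ℤ)} (hβ : IsDom β Eβ) (hγ : IsDom γ Eγ) :
    IsDom (aunion β γ) (Eβ ∪ Eγ) := by
  intro p
  rw [mem_union, ← hβ p, ← hγ p]
  unfold aunion
  rcases β p with _ | t <;> simp

theorem IsDom.disjoint {Eβ Eγ : Finset (ℤ × ℤ)} (hβ : IsDom β Eβ) (hγ : IsDom γ Eγ)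
    (hdis : ∀ p, β p = none ∨ γ p = none) : Disjoint Eβ Eγ := by
  refine disjoint_left.mpr fun p hpβ hpγ => ?_
  rw [← hβ p] at hpβ
  rw [← hγ p] at hpγ
  rcases hdis p with h | h <;> simp [h] at hpβ hpγ

theorem subassembly_aunion_left : Subassembly β (aunion β γ) := fun p t h => by
  simp [aunion, h]

theorem subassembly_aunion_right (hdis : ∀ p, β p = none ∨ γ p = none) :
    Subassembly γ (aunion β γ) := fun p t h => by
  rcases hdis p with hβ | hγ
  · simp [aunion, hβ, h]
  · simp [hγ] at h

theorem Producible.exists_isDom (h : Producible ts τ α) : ∃ E, IsDom α E ∧ E.Nonempty := by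
  induction h with
  | single p t => exact ⟨{p}, isDom_single p t, singleton_nonempty p⟩
  | union _ _ _ _ ihβ ihγ =>
    obtain ⟨Eβ, hβ, hβne⟩ := ihβ
    obtain ⟨Eγ, hγ, -⟩ := ihγ
    exact ⟨Eβ ∪ Eγ, isDom_aunion hβ hγ, hβne.mono subset_union_left⟩

theorem Producible.stable (h : Producible ts τ α) : Stable ts α τ := by
  cases h with
  | single p t =>
    intro E A B hE hAB hdisj ⟨a, ha⟩ ⟨b, hb⟩
    rw [hE.unique (isDom_single p t)] at hAB
    have hpa : a = p := mem_singleton.mp (hAB ▸ mem_union_left B ha)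
    have hpb : b = p := mem_singleton.mp (hAB ▸ mem_union_right A hb)
    subst hpa hpb
    exact absurd hb (disjoint_left.mp hdisj ha)
  | union _ _ _ hstab => exact hstab

theorem le_strengthBetween_of_split (hβ : Stable ts β τ) (hsub : Subassembly β α)
    {E A B : Finset (ℤ × ℤ)} (hE : IsDom β E) (hEAB : E ⊆ A ∪ B) (hAB : Disjoint A B)
    (hA : (A ∩ E).Nonempty) (hB : (B ∩ E).Nonempty) : τ ≤ strengthBetween ts α A B :=
  calc τ ≤ strengthBetween ts β (A ∩ E) (B ∩ E) := by
        refine hβ E _ _ hE ?_ (hAB.mono inter_subset_left inter_subset_left) hA hB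
        rw [← union_inter_distrib_right, inter_eq_right.mpr hEAB]
    _ ≤ strengthBetween ts α (A ∩ E) (B ∩ E) := strengthBetween_le_of_subassembly hsub _ _
    _ ≤ strengthBetween ts α A B := strengthBetween_mono inter_subset_left inter_subset_left

theorem split_or_subset_or_subset {E A B : Finset (ℤ × ℤ)} (h : E ⊆ A ∪ B) :
    ((A ∩ E).Nonempty ∧ (B ∩ E).Nonempty) ∨ E ⊆ A ∨ E ⊆ B := by
  rcases (B ∩ E).eq_empty_or_nonempty with hB | hB
  · refine .inr (.inl fun x hx => (mem_union.mp (h hx)).resolve_right fun hxB => ?_)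
    exact notMem_empty x (hB ▸ mem_inter.mpr ⟨hxB, hx⟩)
  rcases (A ∩ E).eq_empty_or_nonempty with hA | hA
  · refine .inr (.inr fun x hx => (mem_union.mp (h hx)).resolve_left fun hxA => ?_)
    exact notMem_empty x (hA ▸ mem_inter.mpr ⟨hxA, hx⟩)
  exact .inl ⟨hA, hB⟩

theorem stable_aunion {Eβ Eγ : Finset (ℤ × ℤ)} (hβ : Stable ts β τ) (hγ : Stable ts γ τ)
    (hEβ : IsDom β Eβ) (hEγ : IsDom γ Eγ) (hdis : ∀ p, β p = none ∨ γ p = none)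
    (hstr : τ ≤ strengthBetween ts (aunion β γ) Eβ Eγ) : Stable ts (aunion β γ) τ := by
  intro E A B hE hAB hdisj ⟨a, ha⟩ ⟨b, hb⟩
  rw [hE.unique (isDom_aunion hEβ hEγ)] at hAB
  have hβAB : Eβ ⊆ A ∪ B := hAB ▸ subset_union_left
  have hγAB : Eγ ⊆ A ∪ B := hAB ▸ subset_union_right
  have split_γ (h : (A ∩ Eγ).Nonempty ∧ (B ∩ Eγ).Nonempty) :=
    le_strengthBetween_of_split hγ (subassembly_aunion_right hdis) hEγ hγAB hdisj h.1 h.2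
  rcases split_or_subset_or_subset hβAB with hsplit | hβA | hβB
  · exact le_strengthBetween_of_split hβ subassembly_aunion_left hEβ hβAB hdisj hsplit.1 hsplit.2
  · rcases split_or_subset_or_subset hγAB with hsplit | hγA | hγB
    · exact split_γ hsplit
    · exact absurd (union_subset hβA hγA (hAB ▸ mem_union_right A hb))
        (disjoint_right.mp hdisj hb)
    · exact hstr.trans (strengthBetween_mono hβA hγB)
  · rcases split_or_subset_or_subset hγAB with hsplit | hγA | hγB
    · exact split_γ hsplit
    · rw [strengthBetween_comm]
      exact hstr.trans (strengthBetween_mono hβB hγA)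
    · exact absurd (union_subset hβB hγB (hAB ▸ mem_union_left B ha))
        (disjoint_left.mp hdisj ha)

end Assemblies

def Assembly.restrict {T : Type} (α : Assembly T) (C : Finset (ℤ × ℤ)) : Assembly T :=
  fun p => if p ∈ C then α p else none

section Restriction

variable {T : Type} {ts : TileSystem T} {τ : ℕ} {α : Assembly T} {D C₁ C₂ : Finset (ℤ × ℤ)}

theorem isDom_restrict (hD : IsDom α D) (hC : C₁ ⊆ D) : IsDom (α.restrict C₁) C₁ := by
  intro p
  by_cases hp : p ∈ C₁
  · simpa [Assembly.restrict, hp] using hD p |>.trans (iff_of_true (hC hp) hp)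
  · simp [Assembly.restrict, hp]

theorem aunion_restrict : aunion (α.restrict C₁) (α.restrict C₂) = α.restrict (C₁ ∪ C₂) := by
  funext p
  by_cases h₁ : p ∈ C₁ <;> by_cases h₂ : p ∈ C₂ <;>
    simp only [aunion, Assembly.restrict, h₁, h₂, mem_union, if_true, if_false, or_false,
      false_or, or_self] <;> rcases α p <;> rfl

theorem restrict_eq_self (hD : IsDom α D) : α.restrict D = α := by
  funext p
  by_cases hp : p ∈ D
  · simp [Assembly.restrict, hp]
  · simp only [Assembly.restrict, hp, if_false]
    exact (Option.not_isSome_iff_eq_none.mp ((hD p).not.mpr hp)).symm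

theorem producible_restrict_singleton (hD : IsDom α D) {p : ℤ × ℤ} (hp : p ∈ D) :
    Producible ts τ (α.restrict {p}) := by
  obtain ⟨t, ht⟩ := Option.isSome_iff_exists.mp ((hD p).mpr hp)
  convert Producible.single p t using 1
  funext q
  by_cases hq : q = p <;> simp [Assembly.restrict, hq, ht]

theorem producible_restrict_union (hD : IsDom α D) (hC₁ : C₁ ⊆ D) (hC₂ : C₂ ⊆ D)
    (hdisj : Disjoint C₁ C₂) (h₁ : Producible ts τ (α.restrict C₁))
    (h₂ : Producible ts τ (α.restrict C₂)) (hstr : τ ≤ strengthBetween ts α C₁ C₂) :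
    Producible ts τ (α.restrict (C₁ ∪ C₂)) := by
  have hdis (p : ℤ × ℤ) : α.restrict C₁ p = none ∨ α.restrict C₂ p = none := by
    by_cases hp : p ∈ C₁
    · exact .inr (if_neg (disjoint_left.mp hdisj hp))
    · exact .inl (if_neg hp)
  have hstr' : τ ≤ strengthBetween ts (aunion (α.restrict C₁) (α.restrict C₂)) C₁ C₂ := by
    rwa [aunion_restrict, strengthBetween_congr (α := α.restrict (C₁ ∪ C₂)) (β := α)
      fun p hp => if_pos hp]
  rw [← aunion_restrict]
  exact .union h₁ h₂ hdis (stable_aunion h₁.stable h₂.stable (isDom_restrict hD hC₁)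
    (isDom_restrict hD hC₂) hdis hstr')

end Restriction

section MergeSequences

variable {T : Type} {ts : TileSystem T} {τ : ℕ} {α β : Assembly T} {D : Finset (ℤ × ℤ)}
  {𝒞 𝒞' : Finset (Finset (ℤ × ℤ))}

theorem IsPartition.mergeStep (h : IsPartition 𝒞 D) (hs : MergeStep ts α τ 𝒞 𝒞') :
    IsPartition 𝒞' D := by
  obtain ⟨C₁, h₁, C₂, h₂, hne, -, rfl⟩ := hs
  exact h.merge h₁ h₂ hne

theorem IsPartition.reflTransGen (h : IsPartition 𝒞 D)
    (hs : ReflTransGen (MergeStep ts α τ) 𝒞 𝒞') : IsPartition 𝒞' D := by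
  induction hs with
  | refl => exact h
  | tail _ hs ih => exact ih.mergeStep hs

theorem card_lt_of_mergeStep (h : MergeStep ts α τ 𝒞 𝒞') : 𝒞'.card < 𝒞.card := by
  obtain ⟨C₁, h₁, C₂, h₂, hne, -, rfl⟩ := h
  have h₂' : C₂ ∈ 𝒞.erase C₁ := mem_erase.mpr ⟨hne.symm, h₂⟩
  calc (insert (C₁ ∪ C₂) ((𝒞.erase C₁).erase C₂)).card
      ≤ ((𝒞.erase C₁).erase C₂).card + 1 := card_insert_le _ _
    _ < 𝒞.card := by
      have := one_lt_card.mpr ⟨C₁, h₁, C₂, h₂, hne⟩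
      rw [card_erase_of_mem h₂', card_erase_of_mem h₁]
      omega

theorem exists_reflTransGen_maximal (𝒞 : Finset (Finset (ℤ × ℤ))) :
    ∃ 𝒬, ReflTransGen (MergeStep ts α τ) 𝒞 𝒬 ∧ ∀ 𝒬', ¬ MergeStep ts α τ 𝒬 𝒬' := by
  obtain ⟨𝒬, h𝒬, hmin⟩ :=
    (measure Finset.card).wf.has_min {𝒬 | ReflTransGen (MergeStep ts α τ) 𝒞 𝒬} ⟨𝒞, .refl⟩
  exact ⟨𝒬, h𝒬, fun 𝒬' hs => hmin 𝒬' (h𝒬.tail hs) (card_lt_of_mergeStep hs)⟩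

theorem exists_isMergeSeq_getLast_iff :
    (∃ L, IsMergeSeq ts α τ D L ∧ L.getLast? = some 𝒞) ↔
      ReflTransGen (MergeStep ts α τ) (singletonsPart D) 𝒞 := by
  simp only [List.reflTransGen_iff_exists_head_getLast, IsMergeSeq, and_assoc]
  rfl

theorem exists_part_superset_of_producible (hD : IsDom α D) (h𝒞 : IsPartition 𝒞 D)
    (hmax : ∀ 𝒞', ¬ MergeStep ts α τ 𝒞 𝒞') (hβ : Producible ts τ β) (hsub : Subassembly β α)
    {E : Finset (ℤ × ℤ)} (hE : IsDom β E) : ∃ P ∈ 𝒞, E ⊆ P := by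
  induction hβ generalizing E with
  | single p t =>
    simp only [hE.unique (isDom_single p t), singleton_subset_iff]
    exact h𝒞.exists_mem ((hD p).mp (by simp [hsub p t (if_pos rfl)]))
  | @union β γ hβ hγ hdis hstab ihβ ihγ =>
    obtain ⟨Eβ, hEβ, hβne⟩ := hβ.exists_isDom
    obtain ⟨Eγ, hEγ, hγne⟩ := hγ.exists_isDom
    rw [hE.unique (isDom_aunion hEβ hEγ)]
    obtain ⟨Pβ, hPβ, hβP⟩ :=
      ihβ (fun p t h => hsub p t (subassembly_aunion_left p t h)) hEβ
    obtain ⟨Pγ, hPγ, hγP⟩ :=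
      ihγ (fun p t h => hsub p t (subassembly_aunion_right hdis p t h)) hEγ
    by_cases hPP : Pβ = Pγ
    · exact ⟨Pβ, hPβ, union_subset hβP (hPP ▸ hγP)⟩
    refine absurd ⟨Pβ, hPβ, Pγ, hPγ, hPP, ?_, rfl⟩ (hmax _)
    calc τ ≤ strengthBetween ts (aunion β γ) Eβ Eγ :=
          hstab _ Eβ Eγ (isDom_aunion hEβ hEγ) rfl (hEβ.disjoint hEγ hdis) hβne hγne
      _ ≤ strengthBetween ts α Eβ Eγ := strengthBetween_le_of_subassembly hsub _ _
      _ ≤ strengthBetween ts α Pβ Pγ := strengthBetween_mono hβP hγP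

theorem IsPartition.eq_singleton_of_producible (h𝒞 : IsPartition 𝒞 D)
    (hmax : ∀ 𝒞', ¬ MergeStep ts α τ 𝒞 𝒞') (hα : Producible ts τ α) (hD : IsDom α D) :
    𝒞 = {D} := by
  obtain ⟨P, hP, hDP⟩ := exists_part_superset_of_producible hD h𝒞 hmax hα (fun _ _ => id) hD
  exact h𝒞.eq_singleton hP hDP

end MergeSequences

section Producibility

variable {T : Type} {ts : TileSystem T} {τ : ℕ} {α : Assembly T} {D : Finset (ℤ × ℤ)}
  {𝒞 : Finset (Finset (ℤ × ℤ))}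

theorem producible_restrict_of_reflTransGen (hD : IsDom α D)
    (h : ReflTransGen (MergeStep ts α τ) (singletonsPart D) 𝒞) :
    ∀ C ∈ 𝒞, Producible ts τ (α.restrict C) := by
  induction h with
  | refl =>
    intro C hC
    obtain ⟨p, hp, rfl⟩ := mem_image.mp hC
    exact producible_restrict_singleton hD hp
  | @tail 𝒞 𝒞' hreach hs ih =>
    have h𝒞 := (isPartition_singletonsPart D).reflTransGen hreach
    obtain ⟨C₁, h₁, C₂, h₂, hne, hstr, rfl⟩ := hs
    simp only [mem_insert, mem_erase]
    rintro C (rfl | ⟨-, -, hC⟩)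
    · exact producible_restrict_union hD (h𝒞.subset h₁) (h𝒞.subset h₂) (h𝒞.2.1 C₁ h₁ C₂ h₂ hne)
        (ih C₁ h₁) (ih C₂ h₂) hstr
    · exact ih C hC

theorem producible_of_reflTransGen (hD : IsDom α D)
    (h : ReflTransGen (MergeStep ts α τ) (singletonsPart D) {D}) : Producible ts τ α :=
  restrict_eq_self hD ▸ producible_restrict_of_reflTransGen hD h D (mem_singleton_self D)

end Producibility

theorem producible_iff_merge_sequences_general {T : Type} (ts : TileSystem T)
    (τ : ℕ) (α : Assembly T)
    (D : Finset (ℤ × ℤ)) (hD : IsDom α D) :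
    (Producible ts τ α ↔
      ∃ L : List (Finset (Finset (ℤ × ℤ))),
        IsMergeSeq ts α τ D L ∧ L.getLast? = some {D}) ∧
    (Producible ts τ α ↔
      ∀ (L : List (Finset (Finset (ℤ × ℤ)))) (𝒞 : Finset (Finset (ℤ × ℤ))),
        IsMergeSeq ts α τ D L → L.getLast? = some 𝒞 →
        (∀ 𝒞', ¬ MergeStep ts α τ 𝒞 𝒞') → 𝒞 = {D}) := by
  have reach_partition {𝒞} (h : ReflTransGen (MergeStep ts α τ) (singletonsPart D) 𝒞) :
      IsPartition 𝒞 D :=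
    (isPartition_singletonsPart D).reflTransGen h
  obtain ⟨𝒬, hreach, hmax⟩ := exists_reflTransGen_maximal (ts := ts) (α := α) (τ := τ)
    (singletonsPart D)
  refine ⟨⟨fun hα => ?_, fun hL => ?_⟩, ⟨fun hα L 𝒞 hL hlast hmax' => ?_, fun h => ?_⟩⟩
  · rw [(reach_partition hreach).eq_singleton_of_producible hmax hα hD] at hreach
    exact exists_isMergeSeq_getLast_iff.mpr hreach
  · exact producible_of_reflTransGen hD (exists_isMergeSeq_getLast_iff.mp hL)
  · have h𝒞 := reach_partition (exists_isMergeSeq_getLast_iff.mp ⟨L, hL, hlast⟩)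
    exact h𝒞.eq_singleton_of_producible hmax' hα hD
  · obtain ⟨L, hL, hlast⟩ := exists_isMergeSeq_getLast_iff.mpr hreach
    exact producible_of_reflTransGen hD (h L 𝒬 hL hlast hmax ▸ hreach)

/-- The following are equivalent: (1) `α` is producible at
temperature `τ` in the hierarchical model; (2) some merge sequence ends with the
partition `{dom α}`; (3) every maximal merge sequence ends with `{dom α}`. -/
theorem producible_iff_merge_sequences {T : Type} [Fintype T] (ts : TileSystem T)
    (τ : ℕ) (hτ : 0 < τ) (α : Assembly T)
    (D : Finset (ℤ × ℤ)) (hD : IsDom α D) (hne : D.Nonempty) :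
    (Producible ts τ α ↔
      ∃ L : List (Finset (Finset (ℤ × ℤ))),
        IsMergeSeq ts α τ D L ∧ L.getLast? = some {D}) ∧
    (Producible ts τ α ↔
      ∀ (L : List (Finset (Finset (ℤ × ℤ)))) (𝒞 : Finset (Finset (ℤ × ℤ))),
        IsMergeSeq ts α τ D L → L.getLast? = some 𝒞 →
        (∀ 𝒞', ¬ MergeStep ts α τ 𝒞 𝒞') → 𝒞 = {D}) :=
  producible_iff_merge_sequences_general ts τ α D hD
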